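/- arXiv:2209.01442 — 5 statements merged into one kernel-verified Lean document; each statement's English description precedes it below -/
import Mathlib

section
/- Let λ ∈ ℝ with λ ≠ 0. For every E ∈ ℝ one has sqrt((E² − 4)² + (λE)²) + sqrt(E⁴ + (λE)²) ≥ 4, with equality if and only if E = 0. Equivalently, the Lyapunov exponent L(E) of the mosaic Maryland cocycle vanishes if and only if E = 0. -/
/-!
With `c = (λE)² ≥ 0` one has `√((E² - 4)² + c) ≥ 4 - E²` and `√(E⁴ + c) ≥ E²`, so the sum is at
least `4`; the second bound is strict as soon as `c > 0`, i.e. `E ≠ 0`. Since `cosh t = 1` only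
at `t = 0`, the Lyapunov exponent vanishes exactly when the sum equals `4`.
-/

open Real

noncomputable def marylandSum (lam E : ℝ) : ℝ :=
  √((E ^ 2 - 4) ^ 2 + (lam * E) ^ 2) + √(E ^ 4 + (lam * E) ^ 2)

theorem Real.cosh_eq_one_iff {x : ℝ} : cosh x = 1 ↔ x = 0 := by
  refine ⟨fun h => ?_, fun h => by rw [h, cosh_zero]⟩
  by_contra hx
  exact (one_lt_cosh.mpr hx).ne' h

theorem marylandSum_zero (lam : ℝ) : marylandSum lam 0 = 4 := by
  norm_num [marylandSum]

theorem four_le_marylandSum (lam E : ℝ) : 4 ≤ marylandSum lam E := by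
  have h₁ : 4 - E ^ 2 ≤ √((E ^ 2 - 4) ^ 2 + (lam * E) ^ 2) :=
    le_sqrt_of_sq_le (by nlinarith [sq_nonneg (lam * E)])
  have h₂ : E ^ 2 ≤ √(E ^ 4 + (lam * E) ^ 2) :=
    le_sqrt_of_sq_le (by nlinarith [sq_nonneg (lam * E)])
  unfold marylandSum
  linarith

theorem four_lt_marylandSum {lam E : ℝ} (hlam : lam ≠ 0) (hE : E ≠ 0) :
    4 < marylandSum lam E := by
  have hc : 0 < (lam * E) ^ 2 := by positivity
  have h₁ : 4 - E ^ 2 ≤ √((E ^ 2 - 4) ^ 2 + (lam * E) ^ 2) :=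
    le_sqrt_of_sq_le (by nlinarith)
  have h₂ : E ^ 2 < √(E ^ 4 + (lam * E) ^ 2) :=
    lt_sqrt_of_sq_lt (by nlinarith)
  unfold marylandSum
  linarith

theorem marylandSum_eq_four_iff {lam E : ℝ} (hlam : lam ≠ 0) : marylandSum lam E = 4 ↔ E = 0 := by
  refine ⟨fun h => ?_, fun h => h ▸ marylandSum_zero lam⟩
  by_contra hE
  exact (four_lt_marylandSum hlam hE).ne' h

/-- for `λ ≠ 0`, `√((E²-4)² + (λE)²) + √(E⁴ + (λE)²) ≥ 4` with equality
iff `E = 0`; equivalently, the Lyapunov exponent `L(E)` (defined by `L ≥ 0` and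
`4 cosh(2L) = √((E²-4)² + (λE)²) + √(E⁴ + (λE)²)`) vanishes iff `E = 0`. -/
theorem stmt1 (lam : ℝ) (hlam : lam ≠ 0) :
    (∀ E : ℝ, 4 ≤ Real.sqrt ((E ^ 2 - 4) ^ 2 + (lam * E) ^ 2) +
        Real.sqrt (E ^ 4 + (lam * E) ^ 2)) ∧
    (∀ E : ℝ, (Real.sqrt ((E ^ 2 - 4) ^ 2 + (lam * E) ^ 2) +
        Real.sqrt (E ^ 4 + (lam * E) ^ 2) = 4) ↔ E = 0) ∧
    (∀ E L : ℝ, 0 ≤ L →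
      4 * Real.cosh (2 * L) =
        Real.sqrt ((E ^ 2 - 4) ^ 2 + (lam * E) ^ 2) +
          Real.sqrt (E ^ 4 + (lam * E) ^ 2) →
      (L = 0 ↔ E = 0)) := by
  refine ⟨four_le_marylandSum lam, fun E => marylandSum_eq_four_iff hlam, ?_⟩
  intro E L _ hL
  calc L = 0 ↔ cosh (2 * L) = 1 := by rw [cosh_eq_one_iff, mul_eq_zero_iff_left two_ne_zero]
    _ ↔ marylandSum lam E = 4 := by rw [marylandSum, ← hL]; constructor <;> intro h <;> linarith
    _ ↔ E = 0 := marylandSum_eq_four_iff hlam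
end

section
/- Let λ ∈ ℝ, let α ∈ (0,1) be irrational, and let θ ∈ ℝ with θ ∉ 1/2 + αℤ + ℤ. Define u : ℤ → ℝ by u_n = 1 if n ≡ 1 (mod 4), u_n = −1 if n ≡ 3 (mod 4), and u_n = 0 если n is even. Then u is a bounded, not identically zero sequence that satisfies u_{n+1} + u_{n−1} + v_n·u_n = 0 for every n ∈ ℤ; that is, u solves the mosaic Maryland eigenvalue equation with E = 0. -/
open Real

/-- The mosaic Maryland potential: `v_n = λ tan(π(θ + nα/2))` for even `n`, `0` for odd `n`. -/
noncomputable def vpot (lam a θ : ℝ) (n : ℤ) : ℝ :=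
  if Even n then lam * Real.tan (Real.pi * (θ + n * a / 2)) else 0

/-- the explicit 4-periodic sequence `u` (`u_n = 1` for `n ≡ 1 (mod 4)`,
`u_n = -1` for `n ≡ 3 (mod 4)`, `u_n = 0` for even `n`) is a bounded, not identically
zero solution of the mosaic Maryland equation at energy `E = 0`. -/
theorem stmt2 (lam a θ : ℝ) (ha : Irrational a) (ha0 : 0 < a) (ha1 : a < 1)
    (hθ : ∀ k l : ℤ, θ ≠ 1 / 2 + k * a + l)
    (u : ℤ → ℝ)
    (hu : ∀ n : ℤ, u n = if n % 4 = 1 then 1 else if n % 4 = 3 then -1 else 0) :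
    (∃ C : ℝ, ∀ n : ℤ, |u n| ≤ C) ∧
    (∃ n : ℤ, u n ≠ 0) ∧
    (∀ n : ℤ, u (n + 1) + u (n - 1) + vpot lam a θ n * u n = 0) := by
  refine ⟨⟨1, fun n => ?_⟩, ⟨1, by simp [hu]⟩, fun n => ?_⟩
  · rw [hu n]; split_ifs <;> simp
  · have h4 : n % 4 = 0 ∨ n % 4 = 1 ∨ n % 4 = 2 ∨ n % 4 = 3 := by omega
    rcases h4 with h | h | h | h
    · have h1 : (n+1) % 4 = 1 := by omega
      have h2 : (n-1) % 4 = 3 := by omega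
      rw [hu, hu, hu]; simp [h1, h2, h]
    · have he : ¬ Even n := by rw [Int.even_iff]; omega
      have h1 : (n+1) % 4 = 2 := by omega
      have h2 : (n-1) % 4 = 0 := by omega
      rw [hu, hu]; simp [vpot, he, h1, h2]
    · have h1 : (n+1) % 4 = 3 := by omega
      have h2 : (n-1) % 4 = 1 := by omega
      rw [hu, hu, hu]; simp [h1, h2, h]
    · have he : ¬ Even n := by rw [Int.even_iff]; omega
      have h1 : (n+1) % 4 = 0 := by omega
      have h2 : (n-1) % 4 = 2 := by omega
      rw [hu, hu]; simp [vpot, he, h1, h2]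
end

section
/- Let α ∈ (0,1) be irrational. For every ε > 0 there exists a constant C(ε) > 0, depending only on ε and α, such that for every θ ∈ ℝ and all integers ℓ₁ ≤ ℓ₂: ∏_{ℓ = ℓ₁}^{ℓ₂} |cos π(θ + ℓα)| ≤ C(ε)·e^{(ℓ₂ − ℓ₁)(−log 2 + ε)}·min_{ℓ₁ ≤ j ≤ ℓ₂} |cos π(θ + jα)|. -/
open Real Filter MeasureTheory Topology Finset AddCircle

/-!
The function `log |2 cos πx|` has mean zero over a period (this is `∫₀^π log sin = -π log 2`), so
for small `δ` the continuous periodic function `log (max |2 cos πx| δ) ≥ log |2 cos πx|` has mean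
`< ε`. Weyl's equidistribution theorem for the rotation by `α`, uniform in the starting point, then
bounds its Birkhoff sums by `N ε` for large `N`; hence `∏_{ℓ<N} 2 |cos π(θ + ℓα)| ≤ K e^{N ε}` for
all `θ` and `N`, and applying this to the blocks on either side of `j` gives the theorem with
`C = K²`. Uniform equidistribution holds for characters, whose averages are geometric sums, and
extends to all continuous functions by density, since the averaging operators have norm `≤ 1`.
-/

lemma analyticOnNhd_two_mul_cos_pi_mul :
    AnalyticOnNhd ℝ (fun x => 2 * cos (π * x)) Set.univ :=
  analyticOnNhd_const.mul (analyticOnNhd_cos.comp (analyticOnNhd_const.mul analyticOnNhd_id)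
    fun _ _ => Set.mem_univ _)

lemma ae_two_mul_cos_pi_mul_ne_zero : ∀ᵐ x : ℝ, 2 * cos (π * x) ≠ 0 := by
  have h := analyticOnNhd_two_mul_cos_pi_mul.preimage_zero_mem_codiscrete (x := 0) (by simp)
  rw [← Measure.restrict_univ (μ := volume)]
  exact ae_restrict_le_codiscreteWithin MeasurableSet.univ h

lemma intervalIntegrable_log_two_mul_cos_pi_mul (a b : ℝ) :
    IntervalIntegrable (fun x => log (2 * cos (π * x))) volume a b :=
  (analyticOnNhd_two_mul_cos_pi_mul.mono (Set.subset_univ _)).meromorphicOn.intervalIntegrable_log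

lemma integral_log_cos_zero_pi : ∫ x in 0..π, log (cos x) = -log 2 * π := by
  have hper : Function.Periodic (fun x => log (sin x)) π := fun x => by
    simp only [sin_add_pi, log_neg_eq_log]
  calc ∫ x in 0..π, log (cos x) = ∫ x in 0..π, log (sin (x + π / 2)) := by
        simp_rw [sin_add_pi_div_two]
    _ = ∫ x in π / 2..π / 2 + π, log (sin x) := by
      rw [intervalIntegral.integral_comp_add_right (fun x => log (sin x)), zero_add, add_comm]
    _ = -log 2 * π := by rw [hper.intervalIntegral_add_eq, zero_add, integral_log_sin_zero_pi]

lemma integral_log_two_mul_cos_pi_mul : ∫ x in 0..1, log (2 * cos (π * x)) = 0 := by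
  have hcos : IntervalIntegrable (fun x => log (cos (π * x))) volume 0 1 := by
    simpa [pi_ne_zero] using (intervalIntegrable_log_cos (a := 0) (b := π)).comp_mul_left (c := π)
  calc ∫ x in 0..1, log (2 * cos (π * x)) = ∫ x in 0..1, (log 2 + log (cos (π * x))) := by
        refine intervalIntegral.integral_congr_ae ?_
        filter_upwards [ae_two_mul_cos_pi_mul_ne_zero] with x hx _
        exact log_mul two_ne_zero (right_ne_zero_of_mul hx)
    _ = 0 := by
      rw [intervalIntegral.integral_add intervalIntegrable_const hcos,
        intervalIntegral.integral_comp_mul_left (fun x => log (cos x)) pi_ne_zero, mul_zero,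
        mul_one, integral_log_cos_zero_pi]
      field_simp
      simp

lemma tendsto_integral_log_max_abs {g : ℝ → ℝ} {a b : ℝ} (hg : Measurable g)
    (hg0 : ∀ᵐ x, g x ≠ 0) (hlog : IntervalIntegrable (fun x => log (g x)) volume a b) :
    Tendsto (fun δ => ∫ x in a..b, log (max |g x| δ)) (𝓝[>] 0)
      (𝓝 (∫ x in a..b, log (g x))) := by
  refine intervalIntegral.tendsto_integral_filter_of_dominated_convergence (fun x => ‖log (g x)‖)
    (Eventually.of_forall fun δ =>
      (measurable_log.comp (hg.abs.max measurable_const)).aestronglyMeasurable) ?_ hlog.norm ?_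
  · filter_upwards [Ioc_mem_nhdsGT zero_lt_one] with δ ⟨hδ0, hδ1⟩
    filter_upwards [hg0] with x hx _
    rcases le_total δ |g x| with h | h
    · rw [max_eq_left h, log_abs]
    · have hgx : 0 < |g x| := abs_pos.mpr hx
      rw [max_eq_right h, ← log_abs (g x), norm_eq_abs, norm_eq_abs,
        abs_of_nonpos (log_nonpos hδ0.le hδ1), abs_of_nonpos (log_nonpos hgx.le (h.trans hδ1))]
      exact neg_le_neg (log_le_log hgx h)
  · filter_upwards [hg0] with x hx _
    refine tendsto_const_nhds.congr' ?_
    filter_upwards [Ioo_mem_nhdsGT (abs_pos.mpr hx)] with δ hδ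
    rw [max_eq_left hδ.2.le, log_abs]

section Equidistribution

variable {T : ℝ}

noncomputable def rotationAverage (a : AddCircle T) (N : ℕ) :
    C(AddCircle T, ℂ) →L[ℂ] C(AddCircle T, ℂ) :=
  (N : ℂ)⁻¹ • ∑ k ∈ range N, ContinuousMap.compCLM ℂ ℂ (ContinuousMap.addRight (k • a))

lemma rotationAverage_apply (a : AddCircle T) (N : ℕ) (G : C(AddCircle T, ℂ))
    (θ : AddCircle T) :
    rotationAverage a N G θ = (N : ℂ)⁻¹ * ∑ k ∈ range N, G (θ + k • a) := by
  simp [rotationAverage]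

lemma norm_rotationAverage_apply_le [Fact (0 < T)] (a : AddCircle T) (N : ℕ)
    (G : C(AddCircle T, ℂ)) : ‖rotationAverage a N G‖ ≤ ‖G‖ := by
  refine (ContinuousMap.norm_le _ (norm_nonneg G)).2 fun θ => ?_
  rw [rotationAverage_apply, norm_mul, norm_inv, Complex.norm_natCast]
  rcases N.eq_zero_or_pos with rfl | hN
  · simp
  rw [inv_mul_le_iff₀ (by exact_mod_cast hN)]
  simpa using norm_sum_le_of_le (range N) fun k _ => G.norm_coe_le_norm (θ + k • a)

lemma integrable_haarAddCircle [Fact (0 < T)] (G : C(AddCircle T, ℂ)) :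
    Integrable G haarAddCircle :=
  G.continuous.integrable_of_hasCompactSupport (.of_compactSpace _)

lemma lipschitzWith_integral_haarAddCircle [Fact (0 < T)] :
    LipschitzWith 1 fun G : C(AddCircle T, ℂ) => ∫ z, G z ∂haarAddCircle := by
  refine LipschitzWith.of_dist_le_mul fun G H => ?_
  rw [dist_eq_norm, dist_eq_norm, ← integral_sub, NNReal.coe_one, one_mul]
  · simpa using norm_integral_le_of_norm_le_const (μ := haarAddCircle)
      (Eventually.of_forall fun z => (G - H).norm_coe_le_norm z)
  exacts [integrable_haarAddCircle G, integrable_haarAddCircle H]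

lemma fourier_add_nsmul (n : ℤ) (θ a : AddCircle T) (k : ℕ) :
    fourier n (θ + k • a) = fourier n θ * fourier n a ^ k := by
  simp only [fourier_apply, smul_add, smul_comm n k a, toCircle_add, toCircle_nsmul,
    Circle.coe_mul, Circle.coe_pow]

lemma integral_fourier_haarAddCircle [Fact (0 < T)] {n : ℤ} (hn : n ≠ 0) :
    ∫ z : AddCircle T, fourier n z ∂haarAddCircle = 0 := by
  simpa [fourierCoeff, Pi.single_apply, hn.symm] using congrFun (fourierCoeff_fourier (T := T) n) 0

lemma fourier_ne_one_of_not_isOfFinAddOrder [Fact (0 < T)] {a : AddCircle T}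
    (ha : ¬IsOfFinAddOrder a) {n : ℤ} (hn : n ≠ 0) : fourier n a ≠ 1 := by
  rw [fourier_apply, ne_eq, Circle.coe_eq_one, ← toCircle_zero (T := T),
    (injective_toCircle (Fact.out : 0 < T).ne').eq_iff]
  exact fun h => ha (isOfFinAddOrder_iff_zsmul_eq_zero.2 ⟨n, hn, h⟩)

lemma tendsto_rotationAverage_fourier [Fact (0 < T)] {a : AddCircle T}
    (ha : ¬IsOfFinAddOrder a) (n : ℤ) :
    Tendsto (fun N => rotationAverage a N (fourier n)) atTop
      (𝓝 (.const _ (∫ z : AddCircle T, fourier n z ∂haarAddCircle))) := by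
  rcases eq_or_ne n 0 with rfl | hn
  · refine tendsto_const_nhds.congr' ?_
    filter_upwards [eventually_ge_atTop 1] with N hN
    ext θ
    have : (N : ℂ) ≠ 0 := by exact_mod_cast Nat.one_le_iff_ne_zero.1 hN
    simp [rotationAverage_apply, this]
  have hz := fourier_ne_one_of_not_isOfFinAddOrder ha hn
  have hfourier : ∀ x : AddCircle T, ‖fourier n x‖ = 1 := fun x => by
    rw [fourier_apply, Circle.norm_coe]
  rw [integral_fourier_haarAddCircle hn]
  refine squeeze_zero_norm (a := fun N : ℕ => (N : ℝ)⁻¹ * (2 / ‖fourier n a - 1‖))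
    (fun N => ?_) ?_
  · refine (ContinuousMap.norm_le _ (by positivity)).2 fun θ => ?_
    calc ‖rotationAverage a N (fourier n) θ‖
        = (N : ℝ)⁻¹ * (‖fourier n a ^ N - 1‖ / ‖fourier n a - 1‖) := by
          simp only [rotationAverage_apply, fourier_add_nsmul, ← mul_sum, geom_sum_eq hz]
          rw [norm_mul, norm_mul, hfourier, one_mul, norm_inv, Complex.norm_natCast, norm_div]
      _ ≤ (N : ℝ)⁻¹ * (2 / ‖fourier n a - 1‖) := by
          gcongr
          calc ‖fourier n a ^ N - 1‖ ≤ ‖fourier n a ^ N‖ + ‖(1 : ℂ)‖ := norm_sub_le _ _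
            _ = 2 := by rw [norm_pow, hfourier, one_pow, norm_one, one_add_one_eq_two]
  · simpa using (tendsto_inv_atTop_nhds_zero_nat (𝕜 := ℝ)).mul_const (2 / ‖fourier n a - 1‖)

theorem tendsto_rotationAverage [Fact (0 < T)] {a : AddCircle T} (ha : ¬IsOfFinAddOrder a)
    (G : C(AddCircle T, ℂ)) :
    Tendsto (fun N => rotationAverage a N G) atTop (𝓝 (.const _ (∫ z, G z ∂haarAddCircle))) := by
  let S : Set C(AddCircle T, ℂ) := {G | Tendsto (fun N => rotationAverage a N G) atTop
    (𝓝 (ContinuousLinearMap.const ℂ _ (∫ z, G z ∂haarAddCircle)))}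
  have hbound : ∃ C, ∀ N G, ‖rotationAverage a N G‖ ≤ C * ‖G‖ :=
    ⟨1, fun N G => by simpa using norm_rotationAverage_apply_le a N G⟩
  have hequi : Equicontinuous ((↑) ∘ rotationAverage a) :=
    ((NormedSpace.equicontinuous_TFAE (rotationAverage a)).out 3 1).1 hbound
  have hclosed : IsClosed S := hequi.isClosed_setOfPred_tendsto
    ((ContinuousLinearMap.const ℂ (AddCircle T)).continuous.comp
      lipschitzWith_integral_haarAddCircle.continuous)
  have hspan : (Submodule.span ℂ (Set.range (fourier (T := T))) : Set C(AddCircle T, ℂ)) ⊆ S := by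
    intro G hG
    induction hG using Submodule.span_induction with
    | mem _ h => obtain ⟨n, rfl⟩ := h; exact tendsto_rotationAverage_fourier ha n
    | zero => simp [S]
    | add G H _ _ hG hH =>
      simp only [S, Set.mem_ofPred_eq, map_add, ContinuousMap.add_apply,
        integral_add (integrable_haarAddCircle G) (integrable_haarAddCircle H)]
      exact hG.add hH
    | smul c G _ hG =>
      simp only [S, Set.mem_ofPred_eq, map_smul, ContinuousMap.smul_apply, integral_smul]
      exact hG.const_smul c
  have := closure_mono hspan
  rw [hclosed.closure_eq, ← Submodule.topologicalClosure_coe, span_fourier_closure_eq_top] at this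
  exact this (Set.mem_univ G)

end Equidistribution

theorem tendstoUniformly_average_of_periodic {α : ℝ} (hα : Irrational α) {F : ℝ → ℝ}
    (hF : Continuous F) (hper : Function.Periodic F 1) :
    TendstoUniformly (fun (N : ℕ) θ => (N : ℝ)⁻¹ * ∑ k ∈ range N, F (θ + k * α))
      (fun _ => ∫ x in 0..1, F x) atTop := by
  let G : C(UnitAddCircle, ℂ) :=
    ⟨fun z => (hper.lift z : ℂ), Complex.continuous_ofReal.comp <|
      (QuotientAddGroup.isQuotientMap_mk _).continuous_iff.2 (by simpa [Function.comp_def] using hF)⟩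
  have hG : ∀ x : ℝ, G x = F x := fun x => congrArg Complex.ofReal (hper.lift_coe x)
  have hα' : ¬IsOfFinAddOrder (α : UnitAddCircle) :=
    not_isOfFinAddOrder_iff_forall_rat_ne_div.2 fun q h => hα ⟨q, by simpa using h⟩
  have hint : ∫ z, G z ∂haarAddCircle = ↑(∫ x in 0..1, F x) := by
    rw [integral_haarAddCircle, inv_one, one_smul, ← AddCircle.intervalIntegral_preimage 1 0,
      zero_add, ← intervalIntegral.integral_ofReal]
    simp only [hG]
  have := (ContinuousMap.tendsto_iff_tendstoUniformly.1 (tendsto_rotationAverage hα' G)).comp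
    ((↑) : ℝ → UnitAddCircle)
  convert Complex.reCLM.uniformContinuous.comp_tendstoUniformly this using 1
  · ext N θ
    have hcoe : ∀ k : ℕ, ((θ : UnitAddCircle) + k • (α : UnitAddCircle)) = ↑(θ + k * α) :=
      fun k => by rw [← AddCircle.coe_nsmul, ← AddCircle.coe_add, nsmul_eq_mul]
    simp only [Function.comp_apply, rotationAverage_apply, hcoe, hG, Complex.reCLM_apply]
    simp
  · ext θ
    simp [hint]

lemma exists_prod_two_mul_abs_cos_le {α : ℝ} (hα : Irrational α) {ε : ℝ} (hε : 0 < ε) :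
    ∃ K > 0, ∀ (θ : ℝ) (N : ℕ),
      ∏ k ∈ range N, (2 * |cos (π * (θ + k * α))|) ≤ K * exp (N * ε) := by
  have hlim := tendsto_integral_log_max_abs (by fun_prop) ae_two_mul_cos_pi_mul_ne_zero
    (intervalIntegrable_log_two_mul_cos_pi_mul 0 1)
  rw [integral_log_two_mul_cos_pi_mul] at hlim
  obtain ⟨δ, hδε, hδ⟩ := ((hlim.eventually (gt_mem_nhds hε)).and self_mem_nhdsWithin).exists
  set F : ℝ → ℝ := fun x => log (max |2 * cos (π * x)| δ)
  have hF : Continuous F := (by fun_prop : Continuous fun x => max |2 * cos (π * x)| δ).log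
    fun x => (lt_max_of_lt_right hδ).ne'
  have hper : Function.Periodic F 1 := fun x => by
    simp only [F, mul_add, mul_one, cos_add_pi, mul_neg, abs_neg]
  have hexpF : ∀ x, 2 * |cos (π * x)| ≤ exp (F x) := fun x => by
    rw [exp_log (lt_max_of_lt_right hδ), abs_mul, abs_two]
    exact le_max_left _ _
  obtain ⟨N₀, hN₀⟩ := eventually_atTop.1 <| Metric.tendstoUniformly_iff.1
    (tendstoUniformly_average_of_periodic hα hF hper) _ (sub_pos.2 hδε)
  refine ⟨2 ^ N₀, by positivity, fun θ N => ?_⟩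
  rcases le_or_gt N₀ N with hN | hN
  · have hsum : ∑ k ∈ range N, F (θ + k * α) ≤ N * ε := by
      rcases N.eq_zero_or_pos with rfl | hN0
      · simp
      have h := hN₀ N hN θ
      rw [Real.dist_eq, abs_sub_lt_iff] at h
      rw [← inv_mul_le_iff₀ (by exact_mod_cast hN0)]
      linarith
    calc ∏ k ∈ range N, (2 * |cos (π * (θ + k * α))|) ≤ ∏ k ∈ range N, exp (F (θ + k * α)) :=
          prod_le_prod (fun k _ => by positivity) fun k _ => hexpF _
      _ ≤ exp (N * ε) := by rw [← exp_sum]; exact exp_le_exp.2 hsum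
      _ ≤ 2 ^ N₀ * exp (N * ε) := le_mul_of_one_le_left (by positivity) (one_le_pow₀ one_le_two)
  · calc ∏ k ∈ range N, (2 * |cos (π * (θ + k * α))|) ≤ ∏ k ∈ range N, (2 : ℝ) :=
          prod_le_prod (fun k _ => by positivity) fun k _ => by
            linarith [abs_cos_le_one (π * (θ + k * α))]
      _ ≤ 2 ^ N₀ := by rw [prod_const, card_range]; gcongr; norm_num
      _ ≤ 2 ^ N₀ * exp (N * ε) := le_mul_of_one_le_right (by positivity) (one_le_exp (by positivity))

lemma prod_abs_cos_Ico_le {α K ε : ℝ}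
    (hK : ∀ (θ : ℝ) (N : ℕ), ∏ k ∈ range N, (2 * |cos (π * (θ + k * α))|) ≤ K * exp (N * ε))
    (θ : ℝ) {m n : ℤ} (hmn : m ≤ n) :
    ∏ l ∈ Ico m n, |cos (π * (θ + l * α))| ≤ K * exp ((n - m) * (-log 2 + ε)) := by
  have hN : (((n - m).toNat : ℕ) : ℝ) = n - m := by exact_mod_cast Int.toNat_of_nonneg (by omega)
  have hterm : ∀ k : ℕ, |cos (π * (θ + ((m + k : ℤ) : ℝ) * α))|
      = (2 * |cos (π * ((θ + m * α) + k * α))|) / 2 := fun k => by push_cast; ring_nf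
  rw [Int.Ico_eq_finset_map, prod_map]
  simp only [Function.Embedding.trans_apply, Nat.castEmbedding_apply, addLeftEmbedding_apply, hterm]
  rw [prod_div_distrib, prod_const, card_range, div_le_iff₀ (by positivity)]
  calc _ ≤ K * exp (((n - m).toNat : ℕ) * ε) := hK _ _
    _ = K * exp ((n - m) * (-log 2 + ε)) * 2 ^ (n - m).toNat := by
      rw [mul_assoc, ← exp_log (two_pos (α := ℝ)), ← exp_nat_mul, ← exp_add, exp_log two_pos, hN]
      ring_nf

lemma prod_Icc_eq_prod_Ico_mul_mul_prod_Ico {M : Type*} [CommMonoid M] (f : ℤ → M)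
    {a b j : ℤ} (hj : j ∈ Icc a b) :
    ∏ l ∈ Icc a b, f l = (∏ l ∈ Ico a j, f l) * f j * ∏ l ∈ Ico (j + 1) (b + 1), f l := by
  rw [mem_Icc] at hj
  have hsplit : Icc a b = Ico a j ∪ insert j (Ico (j + 1) (b + 1)) := by
    ext l; simp only [mem_Icc, mem_union, mem_insert, mem_Ico]; omega
  rw [hsplit, prod_union, prod_insert, mul_assoc]
  · simp
  · exact disjoint_left.2 fun l h1 h2 => by simp only [mem_Ico, mem_insert] at h1 h2; omega

theorem stmt4_general (a : ℝ) (ha : Irrational a) :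
    ∀ ε : ℝ, 0 < ε → ∃ C : ℝ, 0 < C ∧
      ∀ θ : ℝ, ∀ l1 l2 : ℤ, l1 ≤ l2 →
        ∀ j ∈ Finset.Icc l1 l2,
          (∏ l ∈ Finset.Icc l1 l2, |Real.cos (Real.pi * (θ + l * a))|) ≤
            C * Real.exp (((l2 : ℝ) - l1) * (-Real.log 2 + ε)) *
              |Real.cos (Real.pi * (θ + j * a))| := by
  intro ε hε
  obtain ⟨K, hK0, hK⟩ := exists_prod_two_mul_abs_cos_le ha hε
  refine ⟨K ^ 2, by positivity, fun θ l1 l2 _ j hj => ?_⟩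
  have hj' := mem_Icc.1 hj
  rw [prod_Icc_eq_prod_Ico_mul_mul_prod_Ico _ hj]
  calc _ ≤ K * exp ((j - l1) * (-log 2 + ε)) * |cos (π * (θ + j * a))| *
        (K * exp ((↑(l2 + 1) - ↑(j + 1)) * (-log 2 + ε))) := by
        gcongr
        exacts [prod_abs_cos_Ico_le hK θ hj'.1, prod_abs_cos_Ico_le hK θ (by omega)]
    _ = K ^ 2 * exp ((l2 - l1) * (-log 2 + ε)) * |cos (π * (θ + j * a))| := by
      have hexp : exp ((l2 - l1) * (-log 2 + ε))
          = exp ((j - l1) * (-log 2 + ε)) * exp ((↑(l2 + 1) - ↑(j + 1)) * (-log 2 + ε)) := by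
        rw [← exp_add]; push_cast; ring_nf
      rw [hexp]
      ring

/-- for every `ε > 0` there is `C(ε) > 0` (depending only on `ε` and `α`)
bounding products of `|cos|` along finite orbit segments by the minimal term:
`∏_{ℓ=ℓ₁}^{ℓ₂} |cos π(θ+ℓα)| ≤ C(ε) e^{(ℓ₂-ℓ₁)(-log 2 + ε)} min_j |cos π(θ+jα)|`. -/
theorem stmt4 (a : ℝ) (ha : Irrational a) (ha0 : 0 < a) (ha1 : a < 1) :
    ∀ ε : ℝ, 0 < ε → ∃ C : ℝ, 0 < C ∧
      ∀ θ : ℝ, ∀ l1 l2 : ℤ, l1 ≤ l2 →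
        ∀ j ∈ Finset.Icc l1 l2,
          (∏ l ∈ Finset.Icc l1 l2, |Real.cos (Real.pi * (θ + l * a))|) ≤
            C * Real.exp (((l2 : ℝ) - l1) * (-Real.log 2 + ε)) *
              |Real.cos (Real.pi * (θ + j * a))| :=
  stmt4_general a ha
end

section
/- Let E, λ ∈ ℝ and let x ∈ ℂ, x ≠ 0, satisfy x + 1/x = E² − iλE − 2. Then 2·(|x| + 1/|x|) = sqrt((E² − 4)² + (λE)²) + sqrt(E⁴ + (λE)²). Consequently, if x₂ is a root of largest modulus of z² − (E² − iλE − 2)z + 1 = 0, then |x₂| = e^{2L(E)}, where L(E) ≥ 0 is defined by 4·cosh(2L(E)) = sqrt((E² − 4)² + (λE)²) + sqrt(E⁴ + (λE)²). -/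
open Real Complex

/-!
Writing `x + 1/x ± 2 = (x ± 1)² / x`, the parallelogram law
`‖x + 1‖² + ‖x - 1‖² = 2‖x‖² + 2` gives `2(|x| + 1/|x|) = |t + 2| + |t - 2|` for `t = x + 1/x`,
and for `t = E² - iλE - 2` the right-hand side is the stated sum of square roots.
The roots of `z² - tz + 1` come in pairs `x, 1/x`, so a root of largest modulus has `|x₂| ≥ 1`;
then `|x₂| + 1/|x₂| = 2 cosh (log |x₂|)`, and injectivity of `cosh` on `[0, ∞)` gives
`log |x₂| = 2L`.
-/

theorem Complex.two_mul_norm_add_one_div_norm {x : ℂ} (hx : x ≠ 0) :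
    2 * (‖x‖ + 1 / ‖x‖) = ‖x + 1 / x + 2‖ + ‖x + 1 / x - 2‖ := by
  have hx' : ‖x‖ ≠ 0 := norm_ne_zero_iff.mpr hx
  have h_add : x + 1 / x + 2 = (x + 1) ^ 2 / x := by field_simp; ring
  have h_sub : x + 1 / x - 2 = (x - 1) ^ 2 / x := by field_simp; ring
  have h_par : ‖x + 1‖ ^ 2 + ‖x - 1‖ ^ 2 = 2 * ‖x‖ ^ 2 + 2 := by
    rw [parallelogram_law_with_norm ℝ x 1, norm_one]; ring
  rw [h_add, h_sub, norm_div, norm_div, norm_pow, norm_pow, ← add_div, h_par]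
  field_simp

section ReciprocalRoots

variable {K : Type*} [Field K] {t x : K}

theorem ne_zero_of_sq_sub_mul_add_one_eq_zero (h : x ^ 2 - t * x + 1 = 0) : x ≠ 0 := by
  rintro rfl
  simp at h

theorem add_one_div_eq_of_sq_sub_mul_add_one_eq_zero (h : x ^ 2 - t * x + 1 = 0) :
    x + 1 / x = t := by
  have hx := ne_zero_of_sq_sub_mul_add_one_eq_zero h
  field_simp
  linear_combination h

theorem one_div_sq_sub_mul_add_one_eq_zero (h : x ^ 2 - t * x + 1 = 0) :
    (1 / x) ^ 2 - t * (1 / x) + 1 = 0 := by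
  have hx := ne_zero_of_sq_sub_mul_add_one_eq_zero h
  field_simp
  linear_combination h

end ReciprocalRoots

theorem Real.eq_exp_of_add_inv_eq_two_mul_cosh {r a : ℝ} (hr : 1 ≤ r) (ha : 0 ≤ a)
    (h : r + r⁻¹ = 2 * cosh a) : r = exp a := by
  have hr0 : 0 < r := by linarith
  have h_cosh : cosh (log r) = cosh a := by rw [cosh_log hr0, h]; ring
  rw [← exp_log hr0, cosh_injOn (log_nonneg hr) ha h_cosh]

/-- if `x ≠ 0` satisfies `x + 1/x = E² - iλE - 2`, then
`2(|x| + 1/|x|) = √((E²-4)² + (λE)²) + √(E⁴ + (λE)²)`; consequently a root `x₂` of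
largest modulus of `z² - (E² - iλE - 2)z + 1 = 0` satisfies `|x₂| = e^{2L(E)}`. -/
theorem stmt14 (E lam L : ℝ) (hL0 : 0 ≤ L)
    (hL : 4 * Real.cosh (2 * L) =
      Real.sqrt ((E ^ 2 - 4) ^ 2 + (lam * E) ^ 2) + Real.sqrt (E ^ 4 + (lam * E) ^ 2)) :
    (∀ x : ℂ, x ≠ 0 → x + 1 / x = ((E : ℂ) ^ 2 - 2) - (lam : ℂ) * E * Complex.I →
      2 * (‖x‖ + 1 / ‖x‖) =
        Real.sqrt ((E ^ 2 - 4) ^ 2 + (lam * E) ^ 2) + Real.sqrt (E ^ 4 + (lam * E) ^ 2)) ∧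
    (∀ x2 : ℂ,
      x2 ^ 2 - (((E : ℂ) ^ 2 - 2) - (lam : ℂ) * E * Complex.I) * x2 + 1 = 0 →
      (∀ z : ℂ, z ^ 2 - (((E : ℂ) ^ 2 - 2) - (lam : ℂ) * E * Complex.I) * z + 1 = 0 →
        ‖z‖ ≤ ‖x2‖) →
      ‖x2‖ = Real.exp (2 * L)) := by
  set t : ℂ := ((E : ℂ) ^ 2 - 2) - (lam : ℂ) * E * Complex.I
  have h_add : ‖t + 2‖ = √(E ^ 4 + (lam * E) ^ 2) := by
    have : t + 2 = ((E ^ 2 : ℝ) : ℂ) + ((-(lam * E) : ℝ) : ℂ) * I := by push_cast; ring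
    rw [this, norm_add_mul_I]; ring_nf
  have h_sub : ‖t - 2‖ = √((E ^ 2 - 4) ^ 2 + (lam * E) ^ 2) := by
    have : t - 2 = ((E ^ 2 - 4 : ℝ) : ℂ) + ((-(lam * E) : ℝ) : ℂ) * I := by push_cast; ring
    rw [this, norm_add_mul_I]; ring_nf
  have h_norm : ∀ x : ℂ, x ≠ 0 → x + 1 / x = t →
      2 * (‖x‖ + 1 / ‖x‖) = √((E ^ 2 - 4) ^ 2 + (lam * E) ^ 2) + √(E ^ 4 + (lam * E) ^ 2) := by
    intro x hx hxt
    rw [two_mul_norm_add_one_div_norm hx, hxt, h_add, h_sub, add_comm]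
  refine ⟨h_norm, fun x2 hroot hmax => ?_⟩
  have hx2 := ne_zero_of_sq_sub_mul_add_one_eq_zero hroot
  have h_one_le : 1 ≤ ‖x2‖ := by
    have h_inv := hmax _ (one_div_sq_sub_mul_add_one_eq_zero hroot)
    rw [norm_div, norm_one, div_le_iff₀ (norm_pos_iff.mpr hx2)] at h_inv
    nlinarith [norm_nonneg x2]
  have h_sum := h_norm x2 hx2 (add_one_div_eq_of_sq_sub_mul_add_one_eq_zero hroot)
  refine eq_exp_of_add_inv_eq_two_mul_cosh h_one_le (by positivity) ?_
  rw [← one_div]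
  linarith
end

section
/- Let λ ∈ ℝ, let α ∈ (0,1) be irrational, and let E ∈ ℝ. For every k ≥ 1 there exist real polynomials g of degree at most k − 1 and f of degree at most k (with coefficients depending on E, λ, α, k) such that for every x ∈ ℝ with cos(πx) ≠ 0: P̃_{2k−1}(x) = (cos πx)^{k−1} · g(tan πx) and P̃_{2k}(x) = (cos πx)^{k} · f(tan πx). -/
open Real Filter

/-- The regularized determinant `P̃_k(x)`: `P_k(x)` is the determinant of the `k×k`
tridiagonal matrix over sites `1,…,k` (diagonal `v_n(x) - E`, off-diagonal `1`, with
`v_n(x) = λ tan(π(x + nα/2))` for even `n` and `0` for odd `n`), and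
`P̃_{2k}(x) = P_{2k}(x) ∏_{j=1}^k cos π(x+jα)`,
`P̃_{2k+1}(x) = P_{2k+1}(x) ∏_{j=1}^k cos π(x+jα)`.
Since `tan·cos = sin`, `P̃` is given directly by the everywhere-defined recurrence
`P̃_{2k} = (λ sin π(x+kα) - E cos π(x+kα)) P̃_{2k-1} - cos π(x+kα) P̃_{2k-2}`,
`P̃_{2k+1} = -E P̃_{2k} - cos π(x+kα) P̃_{2k-1}`,
which realizes the unique trigonometric-polynomial extension of the above products. -/
noncomputable def Pt (lam a E : ℝ) : ℕ → ℝ → ℝ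
  | 0, _ => 1
  | 1, _ => -E
  | m + 2, x =>
      (if Even (m + 2) then
          lam * Real.sin (Real.pi * (x + ((m + 2) / 2 : ℕ) * a)) -
            E * Real.cos (Real.pi * (x + ((m + 2) / 2 : ℕ) * a))
        else -E) * Pt lam a E (m + 1) x -
        Real.cos (Real.pi * (x + ((m + 2) / 2 : ℕ) * a)) * Pt lam a E m x

lemma Pt_odd (lam a E x : ℝ) (j : ℕ) :
    Pt lam a E (2*j+3) x = -E * Pt lam a E (2*j+2) x
      - Real.cos (Real.pi * (x + ((j:ℝ)+1)*a)) * Pt lam a E (2*j+1) x := by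
  rw [show 2*j+3 = (2*j+1)+2 from rfl, Pt]
  have h1 : ¬ Even (2*j+1+2) := by simp [Nat.even_iff]
  have h2 : ((2*j+1+2)/2 : ℕ) = j+1 := by omega
  rw [if_neg h1, h2]; push_cast; ring_nf

lemma Pt_even (lam a E x : ℝ) (j : ℕ) :
    Pt lam a E (2*j+4) x =
      (lam * Real.sin (Real.pi * (x + ((j:ℝ)+2)*a)) - E * Real.cos (Real.pi * (x + ((j:ℝ)+2)*a)))
        * Pt lam a E (2*j+3) x
      - Real.cos (Real.pi * (x + ((j:ℝ)+2)*a)) * Pt lam a E (2*j+2) x := by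
  rw [show 2*j+4 = (2*j+2)+2 from rfl, Pt]
  have h1 : Even (2*j+2+2) := by simp [Nat.even_iff]
  have h2 : ((2*j+2+2)/2 : ℕ) = j+2 := by omega
  rw [if_pos h1, h2]; push_cast; ring_nf

lemma cos_shift (x b : ℝ) (hx : Real.cos (Real.pi * x) ≠ 0) :
    Real.cos (Real.pi * (x + b)) =
      Real.cos (Real.pi * x) * (Real.cos (Real.pi * b) -
        Real.tan (Real.pi * x) * Real.sin (Real.pi * b)) := by
  rw [mul_add, Real.cos_add, Real.tan_eq_sin_div_cos]
  field_simp

lemma sin_shift (x b : ℝ) (hx : Real.cos (Real.pi * x) ≠ 0) :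
    Real.sin (Real.pi * (x + b)) =
      Real.cos (Real.pi * x) * (Real.tan (Real.pi * x) * Real.cos (Real.pi * b) +
        Real.sin (Real.pi * b)) := by
  rw [mul_add, Real.sin_add, Real.tan_eq_sin_div_cos]
  field_simp

lemma aux15 (lam a E : ℝ) (j : ℕ) :
    ∃ g f : Polynomial ℝ, g.natDegree ≤ j ∧ f.natDegree ≤ j + 1 ∧
      ∀ x : ℝ, Real.cos (Real.pi * x) ≠ 0 →
        Pt lam a E (2 * j + 1) x =
            Real.cos (Real.pi * x) ^ j * g.eval (Real.tan (Real.pi * x)) ∧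
          Pt lam a E (2 * j + 2) x =
            Real.cos (Real.pi * x) ^ (j + 1) * f.eval (Real.tan (Real.pi * x)) := by
  induction j with
  | zero =>
      refine ⟨Polynomial.C (-E),
        Polynomial.C (-E) * (Polynomial.C lam * (Polynomial.X * Polynomial.C (Real.cos (Real.pi * a))
            + Polynomial.C (Real.sin (Real.pi * a)))
          - Polynomial.C E * (Polynomial.C (Real.cos (Real.pi * a))
            - Polynomial.X * Polynomial.C (Real.sin (Real.pi * a))))
        - (Polynomial.C (Real.cos (Real.pi * a))
            - Polynomial.X * Polynomial.C (Real.sin (Real.pi * a))), ?_, ?_, ?_⟩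
      · simp
      · compute_degree
      · intro x hx
        constructor
        · show Pt lam a E 1 x = _
          rw [Pt]; simp
        · show Pt lam a E 2 x = _
          rw [show (2:ℕ) = 0 + 2 from rfl, Pt]
          have h1 : Even (0+2) := by decide
          rw [if_pos h1]
          norm_num
          rw [show Pt lam a E 1 x = -E from by rw [Pt], show Pt lam a E 0 x = 1 from by rw [Pt]]
          rw [cos_shift x a hx, sin_shift x a hx]
          simp [Polynomial.eval_mul, Polynomial.eval_sub, Polynomial.eval_add]
          ring
  | succ j ih =>
      obtain ⟨g, f, hg, hf, hev⟩ := ih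
      set c1 := Real.cos (Real.pi * (((j:ℝ)+1) * a)) with hc1
      set s1 := Real.sin (Real.pi * (((j:ℝ)+1) * a)) with hs1
      set c2 := Real.cos (Real.pi * (((j:ℝ)+2) * a)) with hc2
      set s2 := Real.sin (Real.pi * (((j:ℝ)+2) * a)) with hs2
      refine ⟨-(Polynomial.C E) * f - (Polynomial.C c1 - Polynomial.X * Polynomial.C s1) * g,
        (Polynomial.C lam * (Polynomial.X * Polynomial.C c2 + Polynomial.C s2)
          - Polynomial.C E * (Polynomial.C c2 - Polynomial.X * Polynomial.C s2))
          * (-(Polynomial.C E) * f - (Polynomial.C c1 - Polynomial.X * Polynomial.C s1) * g)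
        - (Polynomial.C c2 - Polynomial.X * Polynomial.C s2) * f, ?_, ?_, ?_⟩
      · refine le_trans (Polynomial.natDegree_sub_le _ _) (max_le ?_ ?_)
        · exact le_trans Polynomial.natDegree_mul_le (by simpa using hf)
        · refine le_trans Polynomial.natDegree_mul_le ?_
          have h1 : (Polynomial.C c1 - Polynomial.X * Polynomial.C s1 : Polynomial ℝ).natDegree ≤ 1 := by
            compute_degree
          omega
      · refine le_trans (Polynomial.natDegree_sub_le _ _) (max_le ?_ ?_)
        · refine le_trans Polynomial.natDegree_mul_le ?_
          have h1 : (Polynomial.C lam * (Polynomial.X * Polynomial.C c2 + Polynomial.C s2)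
              - Polynomial.C E * (Polynomial.C c2 - Polynomial.X * Polynomial.C s2) : Polynomial ℝ).natDegree ≤ 1 := by
            compute_degree
          have h2 : (-(Polynomial.C E) * f - (Polynomial.C c1 - Polynomial.X * Polynomial.C s1) * g : Polynomial ℝ).natDegree ≤ j + 1 := by
            refine le_trans (Polynomial.natDegree_sub_le _ _) (max_le ?_ ?_)
            · exact le_trans Polynomial.natDegree_mul_le (by simpa using hf)
            · refine le_trans Polynomial.natDegree_mul_le ?_
              have h3 : (Polynomial.C c1 - Polynomial.X * Polynomial.C s1 : Polynomial ℝ).natDegree ≤ 1 := by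
                compute_degree
              omega
          omega
        · refine le_trans Polynomial.natDegree_mul_le ?_
          have h1 : (Polynomial.C c2 - Polynomial.X * Polynomial.C s2 : Polynomial ℝ).natDegree ≤ 1 := by
            compute_degree
          omega
      · intro x hx
        obtain ⟨h1, h2⟩ := hev x hx
        have hb1 : Real.cos (Real.pi * (x + ((j:ℝ)+1) * a))
            = Real.cos (Real.pi * x) * (c1 - Real.tan (Real.pi * x) * s1) :=
          cos_shift x _ hx
        have hb2 : Real.cos (Real.pi * (x + ((j:ℝ)+2) * a))
            = Real.cos (Real.pi * x) * (c2 - Real.tan (Real.pi * x) * s2) :=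
          cos_shift x _ hx
        have hb3 : Real.sin (Real.pi * (x + ((j:ℝ)+2) * a))
            = Real.cos (Real.pi * x) * (Real.tan (Real.pi * x) * c2 + s2) :=
          sin_shift x _ hx
        have hodd : Pt lam a E (2 * (j+1) + 1) x =
            Real.cos (Real.pi * x) ^ (j+1) *
              (-(Polynomial.C E) * f - (Polynomial.C c1 - Polynomial.X * Polynomial.C s1) * g).eval
                (Real.tan (Real.pi * x)) := by
          have := Pt_odd lam a E x j
          rw [show 2*(j+1)+1 = 2*j+3 from by ring] at *
          rw [this, h1, h2, hb1]
          simp [Polynomial.eval_mul, Polynomial.eval_sub]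
          ring
        refine ⟨hodd, ?_⟩
        have := Pt_even lam a E x j
        rw [show 2*(j+1)+2 = 2*j+4 from by ring, this,
          show 2*j+3 = 2*(j+1)+1 from by ring, hodd, h2, hb2, hb3]
        simp [Polynomial.eval_mul, Polynomial.eval_sub, Polynomial.eval_add]
        ring

/-- for every `k ≥ 1` there are real polynomials `g` of degree `≤ k-1`
and `f` of degree `≤ k` with `P̃_{2k-1}(x) = (cos πx)^{k-1} g(tan πx)` and
`P̃_{2k}(x) = (cos πx)^k f(tan πx)` for every `x` with `cos πx ≠ 0`. -/
theorem stmt15 (lam a E : ℝ)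
    (ha : Irrational a) (ha0 : 0 < a) (ha1 : a < 1)
    (k : ℕ) (hk : 1 ≤ k) :
    ∃ g f : Polynomial ℝ, g.natDegree ≤ k - 1 ∧ f.natDegree ≤ k ∧
      ∀ x : ℝ, Real.cos (Real.pi * x) ≠ 0 →
        Pt lam a E (2 * k - 1) x =
            Real.cos (Real.pi * x) ^ (k - 1) * g.eval (Real.tan (Real.pi * x)) ∧
          Pt lam a E (2 * k) x =
            Real.cos (Real.pi * x) ^ k * f.eval (Real.tan (Real.pi * x)) := by
  obtain ⟨j, rfl⟩ : ∃ j, k = j + 1 := ⟨k - 1, by omega⟩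
  obtain ⟨g, f, hg, hf, hev⟩ := aux15 lam a E j
  refine ⟨g, f, by simpa using hg, by simpa using hf, ?_⟩
  intro x hx
  obtain ⟨h1, h2⟩ := hev x hx
  rw [show 2*(j+1)-1 = 2*j+1 from by omega, show 2*(j+1) = 2*j+2 from by ring,
    show j+1-1 = j from by omega]
  exact ⟨h1, h2⟩
end
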